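/- arXiv:math/0009186 — 6 statements merged into one kernel-verified Lean document; each statement's English description precedes it below -/
import Mathlib

section
/- Let 𝔤 be a finite-dimensional complex Lie algebra, N a 𝔤-module and E a finite-dimensional 𝔤-module. The ℂ-linear map ι : F(N,N) ⊗_ℂ E → Hom_ℂ(N, N⊗E) defined by ι(f⊗v)(n) = f(n)⊗v is injective, and its image is exactly F(N, N⊗E), the locally finite part of Hom_ℂ(N, N⊗E); thus ι induces a ℂ-linear isomorphism F(N,N) ⊗_ℂ E ≅ F(N, N⊗E). -/
/-!
Both `ι` and the contraction `h ↦ (id ⊗ φ) ∘ h` of `Hom(N, N ⊗ E)` with a functional `φ ∈ E*`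
satisfy the Leibniz rule for the adjoint actions, so each maps the tensor product of two
finite-dimensional invariant subspaces onto a finite-dimensional invariant subspace. Hence `ι`
sends `F(N,N) ⊗ E` into `F(N, N ⊗ E)`, while for a dual basis `bᵢ*` of `E` and `g ∈ F(N, N ⊗ E)`
the contractions `gᵢ` of `g` with `bᵢ*` are locally finite and `g = ι (∑ᵢ gᵢ ⊗ bᵢ)`. Contracting
with the dual basis also inverts `ι` on all of `Hom(N,N) ⊗ E`; as every `ℂ`-module is flat, `ι`
stays injective on `F(N,N) ⊗ E`.
-/

open TensorProduct

/-- `f` belongs to the locally finite part `F(M,N)` of `Hom_ℂ(M,N)` under the adjoint action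
`⁅x, f⁆ = x ∘ f - f ∘ x` of `L`: the `L`-submodule generated by `f` is finite-dimensional. -/
def InF (L : Type) [LieRing L] [LieAlgebra ℂ L] {M N : Type}
    [AddCommGroup M] [Module ℂ M] [LieRingModule L M] [LieModule ℂ L M]
    [AddCommGroup N] [Module ℂ N] [LieRingModule L N] [LieModule ℂ L N]
    (f : M →ₗ[ℂ] N) : Prop :=
  ∃ V : LieSubmodule ℂ L (M →ₗ[ℂ] N), f ∈ V ∧ FiniteDimensional ℂ V.toSubmodule

variable (L : Type) [LieRing L] [LieAlgebra ℂ L]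

/-- The locally finite part `F(M,N)` of `Hom_ℂ(M,N)`, as a `ℂ`-subspace. -/
def Fmod (M N : Type)
    [AddCommGroup M] [Module ℂ M] [LieRingModule L M] [LieModule ℂ L M]
    [AddCommGroup N] [Module ℂ N] [LieRingModule L N] [LieModule ℂ L N] :
    Submodule ℂ (M →ₗ[ℂ] N) where
  carrier := {f | InF L f}
  zero_mem' := ⟨⊥, LieSubmodule.zero_mem ⊥, by
    rw [LieSubmodule.bot_toSubmodule]; infer_instance⟩
  add_mem' := by
    rintro f g ⟨V, hfV, hV⟩ ⟨W, hgW, hW⟩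
    refine ⟨V ⊔ W, ?_, ?_⟩
    · exact add_mem ((LieSubmodule.mem_sup _ _ _).2 ⟨f, hfV, 0, W.zero_mem, by simp⟩)
        ((LieSubmodule.mem_sup _ _ _).2 ⟨0, V.zero_mem, g, hgW, by simp⟩)
    · rw [LieSubmodule.sup_toSubmodule]
      exact Submodule.finiteDimensional_sup _ _
  smul_mem' := by
    rintro c f ⟨V, hfV, hV⟩
    exact ⟨V, V.smul_mem c hfV, hV⟩

/-- The `ℂ`-linear map `Hom(N,N) ⊗ E → Hom(N, N ⊗ E)` given by `f ⊗ v ↦ (n ↦ f n ⊗ v)`. -/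
noncomputable def iotaMap (N E : Type)
    [AddCommGroup N] [Module ℂ N] [AddCommGroup E] [Module ℂ E] :
    ((N →ₗ[ℂ] N) ⊗[ℂ] E) →ₗ[ℂ] (N →ₗ[ℂ] (N ⊗[ℂ] E)) :=
  TensorProduct.lift
    (((LinearMap.llcomp ℂ N N (N ⊗[ℂ] E)).comp (TensorProduct.mk ℂ N E).flip).flip)


namespace TensorProduct

variable {R M P Q : Type*} [CommRing R] [AddCommGroup M] [Module R M]
  [AddCommGroup P] [Module R P] [AddCommGroup Q] [Module R Q]

variable (R M P Q) in
/-- `contractTensorRight φ h = (id ⊗ φ) ∘ h`, with `P ⊗ R` identified with `P`. -/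
noncomputable def contractTensorRight :
    Module.Dual R Q →ₗ[R] (M →ₗ[R] P ⊗[R] Q) →ₗ[R] (M →ₗ[R] P) :=
  LinearMap.llcomp R M (P ⊗[R] Q) P ∘ₗ
    LinearMap.llcomp R (P ⊗[R] Q) (P ⊗[R] R) P (TensorProduct.rid R P).toLinearMap ∘ₗ
    LinearMap.lTensorHom P

theorem contractTensorRight_apply (φ : Module.Dual R Q) (h : M →ₗ[R] P ⊗[R] Q) (m : M) :
    contractTensorRight R M P Q φ h m = TensorProduct.rid R P (φ.lTensor P (h m)) :=
  rfl

theorem contractTensorRight_rTensorHomToHomRTensor_tmul (φ : Module.Dual R Q)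
    (f : M →ₗ[R] P) (q : Q) :
    contractTensorRight R M P Q φ (rTensorHomToHomRTensor (.id R) M P Q (f ⊗ₜ q)) = φ q • f := by
  ext m
  simp [contractTensorRight_apply]

theorem sum_rid_lTensor_coord_tmul {ι : Type*} [Fintype ι] (b : Module.Basis ι R Q)
    (w : P ⊗[R] Q) : ∑ i, TensorProduct.rid R P ((b.coord i).lTensor P w) ⊗ₜ b i = w := by
  induction w using TensorProduct.induction_on with
  | zero => simp
  | tmul p q =>
    simp only [LinearMap.lTensor_tmul, rid_tmul, smul_tmul,
      ← tmul_sum, Module.Basis.coord_apply, Module.Basis.sum_repr]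
  | add w w' hw hw' =>
    simp only [map_add, add_tmul, Finset.sum_add_distrib, hw, hw']

theorem rTensorHomToHomRTensor_sum_contractTensorRight {ι : Type*} [Fintype ι]
    (b : Module.Basis ι R Q) (h : M →ₗ[R] P ⊗[R] Q) :
    rTensorHomToHomRTensor (.id R) M P Q (∑ i, contractTensorRight R M P Q (b.coord i) h ⊗ₜ b i)
      = h := by
  ext m
  simp only [map_sum, LinearMap.sum_apply, rTensorHomToHomRTensor_apply,
    contractTensorRight_apply, sum_rid_lTensor_coord_tmul]

theorem sum_contractTensorRight_rTensorHomToHomRTensor {ι : Type*} [Fintype ι]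
    (b : Module.Basis ι R Q) (t : (M →ₗ[R] P) ⊗[R] Q) :
    ∑ i, contractTensorRight R M P Q (b.coord i) (rTensorHomToHomRTensor (.id R) M P Q t) ⊗ₜ b i
      = t := by
  induction t using TensorProduct.induction_on with
  | zero => simp
  | tmul f q =>
    simp only [contractTensorRight_rTensorHomToHomRTensor_tmul, smul_tmul,
      ← tmul_sum, Module.Basis.coord_apply, Module.Basis.sum_repr]
  | add t t' ht ht' =>
    simp only [map_add, add_tmul, Finset.sum_add_distrib, ht, ht']

theorem rTensorHomToHomRTensor_injective [Module.Free R Q] [Module.Finite R Q] :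
    Function.Injective (rTensorHomToHomRTensor (.id R) M P Q) := fun t t' htt' ↦ by
  let b := Module.Free.chooseBasis R Q
  rw [← sum_contractTensorRight_rTensorHomToHomRTensor b t,
    ← sum_contractTensorRight_rTensorHomToHomRTensor b t', htt']

variable {L : Type*} [LieRing L] [LieAlgebra R L]
  [LieRingModule L M] [LieModule R L M] [LieRingModule L P] [LieModule R L P]
  [LieRingModule L Q] [LieModule R L Q]

theorem lie_rTensorHomToHomRTensor_tmul (x : L) (f : M →ₗ[R] P) (q : Q) :
    ⁅x, rTensorHomToHomRTensor (.id R) M P Q (f ⊗ₜ q)⁆ =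
      rTensorHomToHomRTensor (.id R) M P Q (⁅x, f⁆ ⊗ₜ q) +
        rTensorHomToHomRTensor (.id R) M P Q (f ⊗ₜ ⁅x, q⁆) := by
  ext m
  simp only [LieHom.lie_apply, rTensorHomToHomRTensor_apply, LinearMap.add_apply,
    LieModule.lie_tmul_right, sub_tmul]
  abel

theorem lie_rid_lTensor (x : L) (φ : Module.Dual R Q) (w : P ⊗[R] Q) :
    ⁅x, TensorProduct.rid R P (φ.lTensor P w)⁆ =
      TensorProduct.rid R P ((⁅x, φ⁆ : Module.Dual R Q).lTensor P w) +
        TensorProduct.rid R P (φ.lTensor P ⁅x, w⁆) := by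
  induction w using TensorProduct.induction_on with
  | zero => simp
  | tmul p q => simp [LieModule.lie_tmul_right, rid_tmul]
  | add w w' hw hw' =>
    simp only [lie_add, map_add, hw, hw']
    abel

theorem lie_contractTensorRight (x : L) (φ : Module.Dual R Q) (h : M →ₗ[R] P ⊗[R] Q) :
    ⁅x, contractTensorRight R M P Q φ h⁆ =
      contractTensorRight R M P Q ⁅x, φ⁆ h + contractTensorRight R M P Q φ ⁅x, h⁆ := by
  ext m
  simp only [LieHom.lie_apply, LinearMap.add_apply, contractTensorRight_apply, map_sub,
    lie_rid_lTensor]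
  abel

end TensorProduct

section LocallyFinite

variable {L} {M N E : Type} [AddCommGroup M] [Module ℂ M] [LieRingModule L M] [LieModule ℂ L M]
  [AddCommGroup N] [Module ℂ N] [LieRingModule L N] [LieModule ℂ L N]
  [AddCommGroup E] [Module ℂ E] [LieRingModule L E] [LieModule ℂ L E]

theorem inF_of_mem_of_lie_mem {V : Submodule ℂ (M →ₗ[ℂ] N)} [FiniteDimensional ℂ V]
    (hV : ∀ (x : L) {f}, f ∈ V → ⁅x, f⁆ ∈ V) {f : M →ₗ[ℂ] N} (hf : f ∈ V) : InF L f :=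
  ⟨{ V with lie_mem := hV _ }, hf, ‹_›⟩

theorem inF_of_leibniz {X Y : Type*} [AddCommGroup X] [Module ℂ X] [LieRingModule L X]
    [LieModule ℂ L X] [AddCommGroup Y] [Module ℂ Y] [LieRingModule L Y] [LieModule ℂ L Y]
    (B : X →ₗ[ℂ] Y →ₗ[ℂ] (M →ₗ[ℂ] N))
    (hB : ∀ (x : L) (a : X) (c : Y), ⁅x, B a c⁆ = B ⁅x, a⁆ c + B a ⁅x, c⁆)
    {A : LieSubmodule ℂ L X} {C : LieSubmodule ℂ L Y}
    [FiniteDimensional ℂ A.toSubmodule] [FiniteDimensional ℂ C.toSubmodule]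
    {a : X} {c : Y} (ha : a ∈ A) (hc : c ∈ C) : InF L (B a c) := by
  let T := TensorProduct.lift (B.compl₁₂ A.toSubmodule.subtype C.toSubmodule.subtype)
  have hT : ∀ (x : L) (s : A.toSubmodule ⊗[ℂ] C.toSubmodule), ⁅x, T s⁆ ∈ LinearMap.range T := by
    intro x s
    induction s using TensorProduct.induction_on with
    | zero => simp
    | tmul a c =>
      refine ⟨⟨⁅x, a.1⁆, A.lie_mem a.2⟩ ⊗ₜ c + a ⊗ₜ ⟨⁅x, c.1⁆, C.lie_mem c.2⟩, ?_⟩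
      simp [T, hB]
    | add s s' hs hs' => simpa only [map_add, lie_add] using add_mem hs hs'
  refine inF_of_mem_of_lie_mem (V := LinearMap.range T) ?_ ⟨⟨a, ha⟩ ⊗ₜ ⟨c, hc⟩, rfl⟩
  rintro x _ ⟨s, rfl⟩
  exact hT x s

theorem iotaMap_eq_rTensorHomToHomRTensor :
    iotaMap N E = rTensorHomToHomRTensor (.id ℂ) N N E :=
  rfl

theorem range_iotaMap_comp_rTensor_subtype [FiniteDimensional ℂ E] :
    LinearMap.range ((iotaMap N E).comp (LinearMap.rTensor E (Fmod L N N).subtype)) =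
      Fmod L N (N ⊗[ℂ] E) := by
  rw [iotaMap_eq_rTensorHomToHomRTensor]
  apply le_antisymm
  · rw [LinearMap.range_le_iff_comap, ← top_le_iff, ← TensorProduct.span_tmul_eq_top,
      Submodule.span_le]
    rintro _ ⟨⟨f, V, hfV, hV⟩, v, rfl⟩
    exact inF_of_leibniz ((TensorProduct.mk ℂ _ E).compr₂ (rTensorHomToHomRTensor _ N N E))
      lie_rTensorHomToHomRTensor_tmul hfV (LieSubmodule.mem_top v)
  · rintro g ⟨W, hgW, hW⟩
    let b := Module.finBasis ℂ E
    have hcontract : ∀ i, contractTensorRight ℂ N N E (b.coord i) g ∈ Fmod L N N := fun i ↦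
      inF_of_leibniz (contractTensorRight ℂ N N E) lie_contractTensorRight
        (LieSubmodule.mem_top _) hgW
    refine ⟨∑ i, ⟨_, hcontract i⟩ ⊗ₜ b i, ?_⟩
    simpa using rTensorHomToHomRTensor_sum_contractTensorRight b g

end LocallyFinite

theorem statement1 (N E : Type)
    [AddCommGroup N] [Module ℂ N] [LieRingModule L N] [LieModule ℂ L N]
    [AddCommGroup E] [Module ℂ E] [LieRingModule L E] [LieModule ℂ L E]
    [FiniteDimensional ℂ E] :
    (∀ (f : N →ₗ[ℂ] N) (v : E) (n : N), iotaMap N E (f ⊗ₜ[ℂ] v) n = f n ⊗ₜ[ℂ] v) ∧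
    Function.Injective
      ((iotaMap N E).comp (LinearMap.rTensor E (Fmod L N N).subtype)) ∧
    LinearMap.range ((iotaMap N E).comp (LinearMap.rTensor E (Fmod L N N).subtype)) =
      Fmod L N (N ⊗[ℂ] E) ∧
    Nonempty ((↥(Fmod L N N) ⊗[ℂ] E) ≃ₗ[ℂ] ↥(Fmod L N (N ⊗[ℂ] E))) := by
  have hinj : Function.Injective
      ((iotaMap N E).comp (LinearMap.rTensor E (Fmod L N N).subtype)) :=
    rTensorHomToHomRTensor_injective.comp
      (Module.Flat.rTensor_preserves_injective_linearMap _ (Submodule.injective_subtype _))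
  have hrange := range_iotaMap_comp_rTensor_subtype (L := L) (N := N) (E := E)
  exact ⟨fun _ _ _ ↦ rfl, hinj, hrange,
    ⟨(LinearEquiv.ofInjective _ hinj).trans (LinearEquiv.ofEq _ _ hrange)⟩⟩
end

section
/- Let 𝔤 be a finite-dimensional complex Lie algebra, N a 𝔤-module and E a finite-dimensional 𝔤-module. The ℂ-linear map ι'' : F(N,N) ⊗_ℂ End_ℂ(E) → Hom_ℂ(N⊗E, N⊗E) defined by ι''(f⊗φ)(n⊗v) = f(n)⊗φ(v) is injective, its image is exactly F(N⊗E, N⊗E), and the resulting bijection F(N,N) ⊗_ℂ End_ℂ(E) ≅ F(N⊗E, N⊗E) is an isomorphism of ℂ-algebras (where the left-hand side carries the tensor-product algebra structure and composition is the product on the right-hand side). -/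
open TensorProduct

variable (L : Type) [LieRing L] [LieAlgebra ℂ L]

/-- The `ℂ`-linear map `Hom(N,N) ⊗ End_ℂ(E) → Hom(N⊗E, N⊗E)`, `f ⊗ φ ↦ (n ⊗ v ↦ f n ⊗ φ v)`. -/
noncomputable def iotaMap2 (N E : Type)
    [AddCommGroup N] [Module ℂ N] [AddCommGroup E] [Module ℂ E] :
    ((N →ₗ[ℂ] N) ⊗[ℂ] (Module.End ℂ E)) →ₗ[ℂ] ((N ⊗[ℂ] E) →ₗ[ℂ] (N ⊗[ℂ] E)) :=
  TensorProduct.homTensorHomMap (RingHom.id ℂ) N E N E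

/-! The map `ι''` is the restriction of the natural map `Hom(N,N) ⊗ End(E) → End(N ⊗ E)`, which is
bijective because `E` has a finite basis (an element of either side is determined by its matrix
of coefficients in `Hom(N,N)`) and is a morphism of `𝔤`-modules. It therefore suffices to show
that, for `W` finite-dimensional, the locally finite part of `M ⊗ W` is `F(M) ⊗ W`. If `m` lies in a
finite-dimensional submodule `V`, then `m ⊗ w` lies in the finite-dimensional submodule `V ⊗ W`.
Conversely, the coefficients of `t ∈ M ⊗ W` in a basis of `W` are the images of the `t ⊗ β`,
`β ∈ W*`, under the equivariant contraction `(M ⊗ W) ⊗ W* → M`, and equivariant maps preserve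
local finiteness. -/

section LocallyFinite

variable (K 𝔤 : Type*) [Field K] [LieRing 𝔤]
variable (M : Type*) [AddCommGroup M] [Module K M] [LieRingModule 𝔤 M]

def locallyFinitePart : Submodule K M where
  carrier := {m | ∃ V : LieSubmodule K 𝔤 M, m ∈ V ∧ FiniteDimensional K V.toSubmodule}
  zero_mem' := ⟨⊥, zero_mem _, by rw [LieSubmodule.bot_toSubmodule]; infer_instance⟩
  add_mem' := by
    rintro m n ⟨V, hmV, hV⟩ ⟨W, hnW, hW⟩
    refine ⟨V ⊔ W, add_mem (LieSubmodule.mem_sup_left hmV) (LieSubmodule.mem_sup_right hnW), ?_⟩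
    rw [LieSubmodule.sup_toSubmodule]
    infer_instance
  smul_mem' := by
    rintro c m ⟨V, hmV, hV⟩
    exact ⟨V, V.smul_mem c hmV, hV⟩

variable {K 𝔤 M}

theorem mem_locallyFinitePart_of_finiteDimensional [FiniteDimensional K M] (m : M) :
    m ∈ locallyFinitePart K 𝔤 M :=
  ⟨⊤, LieSubmodule.mem_top m, by rw [LieSubmodule.top_toSubmodule]; infer_instance⟩

variable {M' : Type*} [AddCommGroup M'] [Module K M'] [LieRingModule 𝔤 M']

theorem LieModuleHom.map_mem_locallyFinitePart (g : M →ₗ⁅K,𝔤⁆ M') {m : M}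
    (hm : m ∈ locallyFinitePart K 𝔤 M) : g m ∈ locallyFinitePart K 𝔤 M' := by
  obtain ⟨V, hmV, hV⟩ := hm
  refine ⟨V.map g, LieSubmodule.mem_map_of_mem hmV, ?_⟩
  rw [LieSubmodule.toSubmodule_map]
  infer_instance

theorem LieModuleHom.mem_locallyFinitePart_of_injective {g : M →ₗ⁅K,𝔤⁆ M'}
    (hg : Function.Injective g) {m : M} (hm : g m ∈ locallyFinitePart K 𝔤 M') :
    m ∈ locallyFinitePart K 𝔤 M := by
  obtain ⟨V, hmV, hV⟩ := hm
  refine ⟨V.comap g, hmV, ?_⟩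
  rw [LieSubmodule.toSubmodule_comap]
  exact Module.Finite.of_injective ((g : M →ₗ[K] M').restrict fun _ h ↦ h)
    fun a b hab ↦ Subtype.ext (hg (congrArg Subtype.val hab))

theorem LieModuleHom.map_locallyFinitePart_of_bijective {g : M →ₗ⁅K,𝔤⁆ M'}
    (hg : Function.Bijective g) :
    (locallyFinitePart K 𝔤 M).map (g : M →ₗ[K] M') = locallyFinitePart K 𝔤 M' := by
  refine le_antisymm ?_ fun m' hm' ↦ ?_
  · rintro _ ⟨m, hm, rfl⟩
    exact g.map_mem_locallyFinitePart hm
  · obtain ⟨m, rfl⟩ := hg.surjective m'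
    exact ⟨m, g.mem_locallyFinitePart_of_injective hg.injective hm', rfl⟩

end LocallyFinite

section LocallyFiniteTensor

variable {K 𝔤 : Type*} [Field K] [LieRing 𝔤] [LieAlgebra K 𝔤]
variable {M W : Type*} [AddCommGroup M] [Module K M] [LieRingModule 𝔤 M] [LieModule K 𝔤 M]
  [AddCommGroup W] [Module K W] [LieRingModule 𝔤 W] [LieModule K 𝔤 W]

theorem tmul_mem_locallyFinitePart [FiniteDimensional K W] {m : M}
    (hm : m ∈ locallyFinitePart K 𝔤 M) (w : W) : m ⊗ₜ[K] w ∈ locallyFinitePart K 𝔤 (M ⊗[K] W) := by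
  obtain ⟨V, hmV, hV⟩ := hm
  exact (TensorProduct.LieModule.map V.incl (LieModuleHom.id : W →ₗ⁅K,𝔤⁆ W))
    |>.map_mem_locallyFinitePart (mem_locallyFinitePart_of_finiteDimensional ((⟨m, hmV⟩ : V) ⊗ₜ w))

def contractRightLie : (M ⊗[K] W) ⊗[K] Module.Dual K W →ₗ⁅K,𝔤⁆ M where
  toLinearMap := (TensorProduct.rid K M).toLinearMap ∘ₗ (contractRight K W).lTensor M ∘ₗ
    (TensorProduct.assoc K M W (Module.Dual K W)).toLinearMap
  map_lie' {x t} := by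
    set Φ := (TensorProduct.rid K M).toLinearMap ∘ₗ (contractRight K W).lTensor M ∘ₗ
      (TensorProduct.assoc K M W (Module.Dual K W)).toLinearMap
    have hΦ : Φ ∘ₗ LieModule.toEnd K 𝔤 _ x = LieModule.toEnd K 𝔤 M x ∘ₗ Φ := by
      ext m w β
      simp [Φ, TensorProduct.LieModule.lie_tmul_right, add_tmul]
    exact LinearMap.congr_fun hΦ t

@[simp] theorem contractRightLie_tmul (m : M) (w : W) (β : Module.Dual K W) :
    contractRightLie (𝔤 := 𝔤) ((m ⊗ₜ[K] w) ⊗ₜ[K] β) = β w • m := by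
  simp [contractRightLie]

theorem equivFinsuppOfBasisRight_apply_eq_contractRightLie {ι : Type*} [DecidableEq ι]
    (b : Module.Basis ι K W) (t : M ⊗[K] W) (i : ι) :
    equivFinsuppOfBasisRight b t i = contractRightLie (𝔤 := 𝔤) (t ⊗ₜ[K] b.coord i) := by
  induction t using TensorProduct.induction_on with
  | zero => simp
  | tmul m w => simp
  | add s u hs hu => simp [add_tmul, hs, hu]

theorem locallyFinitePart_tensorProduct [FiniteDimensional K W] :
    locallyFinitePart K 𝔤 (M ⊗[K] W) =
      LinearMap.range ((locallyFinitePart K 𝔤 M).subtype.rTensor W) := by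
  classical
  refine le_antisymm (fun t ht ↦ ?_) ?_
  · let b := Module.finBasis K W
    have hcoord : ∀ i, equivFinsuppOfBasisRight b t i ∈ locallyFinitePart K 𝔤 M :=
      fun i ↦ equivFinsuppOfBasisRight_apply_eq_contractRightLie (𝔤 := 𝔤) b t i ▸
        contractRightLie.map_mem_locallyFinitePart (tmul_mem_locallyFinitePart ht _)
    rw [← (equivFinsuppOfBasisRight b).symm_apply_apply t,
      equivFinsuppOfBasisRight_symm_apply]
    exact Submodule.finsuppSum_mem _ _ _ _ fun i _ ↦ ⟨⟨_, hcoord i⟩ ⊗ₜ[K] b i, rfl⟩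
  · rintro _ ⟨s, rfl⟩
    induction s using TensorProduct.induction_on with
    | zero => simp
    | tmul m w => exact tmul_mem_locallyFinitePart m.2 w
    | add s u hs hu => rw [map_add]; exact add_mem hs hu

end LocallyFiniteTensor

section HomTensorHomBijective

variable {R M N P Q : Type*} [CommRing R]
  [AddCommGroup M] [Module R M] [AddCommGroup N] [Module R N]
  [AddCommGroup P] [Module R P] [AddCommGroup Q] [Module R Q]
  {ι κ : Type*} [Fintype ι] [DecidableEq ι] [Fintype κ] [DecidableEq κ]

theorem equivFinsuppOfBasisRight_homTensorHomMap_apply (b : Module.Basis ι R N)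
    (c : Module.Basis κ R Q) (t : (M →ₗ[R] P) ⊗[R] (N →ₗ[R] Q)) (m : M) (i : ι) (k : κ) :
    equivFinsuppOfBasisRight c (homTensorHomMap (RingHom.id R) M N P Q t (m ⊗ₜ b i)) k =
      equivFinsuppOfBasisRight (b.linearMap c) t (k, i) m := by
  induction t using TensorProduct.induction_on with
  | zero => simp
  | tmul f φ => simp [Matrix.stdBasis, LinearMap.toMatrix_apply]
  | add s u hs hu => simp [hs, hu]

theorem homTensorHomMap_bijective_of_basis (b : Module.Basis ι R N) (c : Module.Basis κ R Q) :
    Function.Bijective (homTensorHomMap (RingHom.id R) M N P Q) := by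
  have hext : ∀ {g g' : M ⊗[R] N →ₗ[R] P ⊗[R] Q}, (∀ m i k,
      equivFinsuppOfBasisRight c (g (m ⊗ₜ b i)) k =
        equivFinsuppOfBasisRight c (g' (m ⊗ₜ b i)) k) → g = g' := fun h ↦
    TensorProduct.ext (LinearMap.ext fun m ↦ b.ext fun i ↦
      (equivFinsuppOfBasisRight c).injective (Finsupp.ext (h m i)))
  refine ⟨(injective_iff_map_eq_zero _).2 fun t ht ↦ ?_, fun g ↦ ?_⟩
  · apply (equivFinsuppOfBasisRight (b.linearMap c)).injective
    ext ⟨k, i⟩ m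
    simpa [ht] using (equivFinsuppOfBasisRight_homTensorHomMap_apply b c t m i k).symm
  · let F : κ × ι →₀ (M →ₗ[R] P) := Finsupp.equivFunOnFinite.symm fun ki ↦
      Finsupp.lapply ki.1 ∘ₗ (equivFinsuppOfBasisRight c).toLinearMap ∘ₗ g ∘ₗ
        (mk R M N).flip (b ki.2)
    refine ⟨(equivFinsuppOfBasisRight (b.linearMap c)).symm F, hext fun m i k ↦ ?_⟩
    rw [equivFinsuppOfBasisRight_homTensorHomMap_apply, LinearEquiv.apply_symm_apply]
    simp [F]

end HomTensorHomBijective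

section HomTensorHom

variable {R 𝔤 : Type*} [CommRing R] [LieRing 𝔤] [LieAlgebra R 𝔤]
variable {M N P Q : Type*}
  [AddCommGroup M] [Module R M] [LieRingModule 𝔤 M] [LieModule R 𝔤 M]
  [AddCommGroup N] [Module R N] [LieRingModule 𝔤 N] [LieModule R 𝔤 N]
  [AddCommGroup P] [Module R P] [LieRingModule 𝔤 P] [LieModule R 𝔤 P]
  [AddCommGroup Q] [Module R Q] [LieRingModule 𝔤 Q] [LieModule R 𝔤 Q]

def homTensorHomMapLie :
    (M →ₗ[R] P) ⊗[R] (N →ₗ[R] Q) →ₗ⁅R,𝔤⁆ (M ⊗[R] N →ₗ[R] P ⊗[R] Q) where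
  toLinearMap := homTensorHomMap (RingHom.id R) M N P Q
  map_lie' {x t} := by
    induction t using TensorProduct.induction_on with
    | zero => simp
    | tmul f g =>
      refine ext' fun m n ↦ ?_
      simp [TensorProduct.LieModule.lie_tmul_right, sub_tmul, tmul_sub]
      abel
    | add s u hs hu =>
      simp only [LinearMap.toFun_eq_coe] at hs hu ⊢
      rw [lie_add, map_add, hs, hu, map_add, lie_add]

end HomTensorHom


theorem Fmod_eq_locallyFinitePart (M N : Type)
    [AddCommGroup M] [Module ℂ M] [LieRingModule L M] [LieModule ℂ L M]
    [AddCommGroup N] [Module ℂ N] [LieRingModule L N] [LieModule ℂ L N] :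
    Fmod L M N = locallyFinitePart ℂ L (M →ₗ[ℂ] N) :=
  rfl

theorem statement3 (N E : Type)
    [AddCommGroup N] [Module ℂ N] [LieRingModule L N] [LieModule ℂ L N]
    [AddCommGroup E] [Module ℂ E] [LieRingModule L E] [LieModule ℂ L E]
    [FiniteDimensional ℂ E] :
    (∀ (f : N →ₗ[ℂ] N) (φ : Module.End ℂ E) (n : N) (v : E),
        iotaMap2 N E (f ⊗ₜ[ℂ] φ) (n ⊗ₜ[ℂ] v) = f n ⊗ₜ[ℂ] φ v) ∧
    Function.Injective
      ((iotaMap2 N E).comp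
        (LinearMap.rTensor (Module.End ℂ E) (Fmod L N N).subtype)) ∧
    LinearMap.range
      ((iotaMap2 N E).comp
        (LinearMap.rTensor (Module.End ℂ E) (Fmod L N N).subtype)) =
      Fmod L (N ⊗[ℂ] E) (N ⊗[ℂ] E) ∧
    (∀ (f f' : N →ₗ[ℂ] N) (φ φ' : Module.End ℂ E),
        iotaMap2 N E ((f ∘ₗ f') ⊗ₜ[ℂ] (φ ∘ₗ φ')) =
          iotaMap2 N E (f ⊗ₜ[ℂ] φ) ∘ₗ iotaMap2 N E (f' ⊗ₜ[ℂ] φ')) ∧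
    iotaMap2 N E (LinearMap.id ⊗ₜ[ℂ] LinearMap.id) = LinearMap.id := by
  have hbij : Function.Bijective (iotaMap2 N E) :=
    homTensorHomMap_bijective_of_basis (Module.finBasis ℂ E) (Module.finBasis ℂ E)
  have hincl := Module.Flat.rTensor_preserves_injective_linearMap (M := Module.End ℂ E) _
    (Fmod L N N).injective_subtype
  refine ⟨fun _ _ _ _ ↦ rfl, hbij.injective.comp hincl, ?_,
    fun f f' φ φ' ↦ map_comp f φ f' φ', map_id⟩
  rw [LinearMap.range_comp, Fmod_eq_locallyFinitePart, Fmod_eq_locallyFinitePart,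
    ← locallyFinitePart_tensorProduct]
  exact (homTensorHomMapLie (𝔤 := L)).map_locallyFinitePart_of_bijective hbij
end

section
/- Let 𝔤 be a finite-dimensional complex Lie algebra, N a 𝔤-module and E a finite-dimensional 𝔤-module. Set A := F(N,N) and B := F(N⊗E, N⊗E), and view F(N, N⊗E) as a right A-module via precomposition. Then the algebra homomorphism B → End_A(F(N, N⊗E)) given by left composition (b ↦ (ψ ↦ b∘ψ)) is bijective; that is, End_A(F(N, N⊗E)) = F(N⊗E, N⊗E). -/
open TensorProduct

variable (L : Type) [LieRing L] [LieAlgebra ℂ L]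

/-!
Fix a basis `eᵢ` of `E` with dual basis `eᵢ*`. The maps `ιₑ : n ↦ n ⊗ e` and the contractions
`πₗ : n ⊗ e ↦ l(e) • n` depend `L`-equivariantly on `e ∈ E` and `l ∈ E*`, hence are locally
finite, and `∑ᵢ ι_{eᵢ} ∘ π_{eᵢ*} = id`. So every `ψ ∈ F(N, N ⊗ E)` equals
`∑ᵢ ι_{eᵢ} ∘ (π_{eᵢ*} ∘ ψ)` with coefficients `π_{eᵢ*} ∘ ψ ∈ A`, and an `A`-linear `Φ` is left
composition with `∑ᵢ Φ(ι_{eᵢ}) ∘ π_{eᵢ*}`. Local finiteness is preserved by composition because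
`g ∘ f` is the image of `g ⊗ f` under the equivariant composition map `V ⊗ W → Hom`.
-/

section LocallyFinite

variable {L : Type} [LieRing L] [LieAlgebra ℂ L] {M N P : Type}
  [AddCommGroup M] [Module ℂ M] [LieRingModule L M] [LieModule ℂ L M]
  [AddCommGroup N] [Module ℂ N] [LieRingModule L N] [LieModule ℂ L N]
  [AddCommGroup P] [Module ℂ P] [LieRingModule L P] [LieModule ℂ L P]

theorem inF_of_lieModuleHom {V : Type} [AddCommGroup V] [Module ℂ V] [LieRingModule L V]
    [LieModule ℂ L V] [FiniteDimensional ℂ V] (φ : V →ₗ⁅ℂ,L⁆ (M →ₗ[ℂ] N)) (v : V) :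
    InF L (φ v) :=
  ⟨φ.range, ⟨v, rfl⟩, by rw [LieModuleHom.toSubmodule_range]; infer_instance⟩

theorem LinearMap.lie_comp (x : L) (g : N →ₗ[ℂ] P) (f : M →ₗ[ℂ] N) :
    ⁅x, g ∘ₗ f⁆ = ⁅x, g⁆ ∘ₗ f + g ∘ₗ ⁅x, f⁆ := by
  ext m
  simp only [LieHom.lie_apply, LinearMap.add_apply, LinearMap.comp_apply, map_sub]
  abel

variable (L M N P) in
noncomputable def compLieModuleHom :
    (N →ₗ[ℂ] P) →ₗ⁅ℂ,L⁆ (M →ₗ[ℂ] N) →ₗ[ℂ] (M →ₗ[ℂ] P) where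
  __ := LinearMap.llcomp ℂ M N P
  map_lie' {x g} := by
    ext f : 1
    simp only [LieHom.lie_apply, AddHom.toFun_eq_coe, LinearMap.coe_toAddHom,
      LinearMap.llcomp_apply', LinearMap.lie_comp]
    abel

@[simp]
theorem compLieModuleHom_apply (g : N →ₗ[ℂ] P) (f : M →ₗ[ℂ] N) :
    compLieModuleHom L M N P g f = g ∘ₗ f :=
  rfl

theorem InF.comp {g : N →ₗ[ℂ] P} {f : M →ₗ[ℂ] N} (hg : InF L g) (hf : InF L f) :
    InF L (g ∘ₗ f) := by
  obtain ⟨V, hgV, hV⟩ := hg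
  obtain ⟨W, hfW, hW⟩ := hf
  simpa using inF_of_lieModuleHom
    ((TensorProduct.LieModule.liftLie ℂ L _ _ _ (compLieModuleHom L M N P)).comp
      (TensorProduct.LieModule.mapIncl V W)) (⟨g, hgV⟩ ⊗ₜ ⟨f, hfW⟩)

end LocallyFinite

section TensorRight

variable {L : Type} [LieRing L] [LieAlgebra ℂ L] {N E : Type}
  [AddCommGroup N] [Module ℂ N] [LieRingModule L N] [LieModule ℂ L N]
  [AddCommGroup E] [Module ℂ E] [LieRingModule L E] [LieModule ℂ L E]

variable (L N E) in
noncomputable def tmulRightLieModuleHom : E →ₗ⁅ℂ,L⁆ (N →ₗ[ℂ] N ⊗[ℂ] E) where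
  __ := (TensorProduct.mk ℂ N E).flip
  map_lie' {x e} := by
    ext n
    simp [LieHom.lie_apply, LieModule.lie_tmul_right]

@[simp]
theorem tmulRightLieModuleHom_apply (e : E) (n : N) :
    tmulRightLieModuleHom L N E e n = n ⊗ₜ e :=
  rfl

variable (L N E) in
noncomputable def contractRightLieModuleHom :
    Module.Dual ℂ E →ₗ⁅ℂ,L⁆ (N ⊗[ℂ] E →ₗ[ℂ] N) where
  __ := LinearMap.compRight ℂ (TensorProduct.rid ℂ N).toLinearMap ∘ₗ LinearMap.lTensorHom N
  map_lie' {x l} := by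
    ext n e
    simp [LieHom.lie_apply, LieModule.lie_tmul_right]

@[simp]
theorem contractRightLieModuleHom_apply_tmul (l : Module.Dual ℂ E) (n : N) (e : E) :
    contractRightLieModuleHom L N E l (n ⊗ₜ e) = l e • n := by
  simp [contractRightLieModuleHom]

theorem Module.Basis.sum_tmulRight_comp_contractRight {ι : Type*} [Fintype ι]
    (b : Module.Basis ι ℂ E) :
    ∑ i, tmulRightLieModuleHom L N E (b i) ∘ₗ contractRightLieModuleHom L N E (b.coord i) =
      LinearMap.id := by
  ext n e
  simp only [AlgebraTensorModule.curry_apply, LinearMap.restrictScalars_self, curry_apply,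
    LinearMap.coe_sum, LinearMap.coe_comp, Finset.sum_apply, Function.comp_apply,
    contractRightLieModuleHom_apply_tmul, Module.Basis.coord_apply, map_smul,
    tmulRightLieModuleHom_apply, LinearMap.id_coe, id_eq]
  simp_rw [← TensorProduct.tmul_smul, ← TensorProduct.tmul_sum, b.sum_repr]

end TensorRight

theorem statement4 (N E : Type)
    [AddCommGroup N] [Module ℂ N] [LieRingModule L N] [LieModule ℂ L N]
    [AddCommGroup E] [Module ℂ E] [LieRingModule L E] [LieModule ℂ L E]
    [FiniteDimensional ℂ E]
    (A : Subalgebra ℂ (Module.End ℂ N)) (hA : ∀ f : Module.End ℂ N, f ∈ A ↔ InF L f)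
    [Module (↥A)ᵐᵒᵖ ↥(Fmod L N (N ⊗[ℂ] E))]
    (hsmul : ∀ (a : ↥A) (ψ : ↥(Fmod L N (N ⊗[ℂ] E))),
      ((MulOpposite.op a • ψ : ↥(Fmod L N (N ⊗[ℂ] E))) : N →ₗ[ℂ] N ⊗[ℂ] E) =
        (ψ : N →ₗ[ℂ] N ⊗[ℂ] E) ∘ₗ (a : Module.End ℂ N)) :
    (∀ b : (N ⊗[ℂ] E) →ₗ[ℂ] (N ⊗[ℂ] E), InF L b →
      ∀ ψ : ↥(Fmod L N (N ⊗[ℂ] E)), InF L (b ∘ₗ (ψ : N →ₗ[ℂ] N ⊗[ℂ] E))) ∧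
    (∀ b b' : (N ⊗[ℂ] E) →ₗ[ℂ] (N ⊗[ℂ] E), InF L b → InF L b' →
      (∀ ψ : ↥(Fmod L N (N ⊗[ℂ] E)),
        b ∘ₗ (ψ : N →ₗ[ℂ] N ⊗[ℂ] E) = b' ∘ₗ (ψ : N →ₗ[ℂ] N ⊗[ℂ] E)) → b = b') ∧
    (∀ Φ : ↥(Fmod L N (N ⊗[ℂ] E)) →ₗ[(↥A)ᵐᵒᵖ] ↥(Fmod L N (N ⊗[ℂ] E)),
      ∃ b : (N ⊗[ℂ] E) →ₗ[ℂ] (N ⊗[ℂ] E), InF L b ∧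
        ∀ ψ : ↥(Fmod L N (N ⊗[ℂ] E)),
          ((Φ ψ : ↥(Fmod L N (N ⊗[ℂ] E))) : N →ₗ[ℂ] N ⊗[ℂ] E) =
            b ∘ₗ (ψ : N →ₗ[ℂ] N ⊗[ℂ] E)) := by
  let bE := Module.finBasis ℂ E
  let π i : N ⊗[ℂ] E →ₗ[ℂ] N := contractRightLieModuleHom L N E (bE.coord i)
  let ι i : Fmod L N (N ⊗[ℂ] E) :=
    ⟨tmulRightLieModuleHom L N E (bE i), inF_of_lieModuleHom _ _⟩
  have hdecomp (ψ : Fmod L N (N ⊗[ℂ] E)) : ψ = ∑ i,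
      MulOpposite.op (⟨π i ∘ₗ ψ, (hA _).2 ((inF_of_lieModuleHom _ _).comp ψ.2)⟩ : A) • ι i := by
    ext n
    simpa [hsmul, π, ι] using
      (LinearMap.congr_fun (bE.sum_tmulRight_comp_contractRight (L := L))
        ((ψ : N →ₗ[ℂ] N ⊗[ℂ] E) n)).symm
  refine ⟨fun f hf ψ => hf.comp ψ.2, fun f f' _ _ h => ?_, fun Φ => ?_⟩
  · exact TensorProduct.ext' fun n e =>
      LinearMap.congr_fun (h ⟨_, inF_of_lieModuleHom (tmulRightLieModuleHom L N E) e⟩) n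
  · refine ⟨∑ i, (Φ (ι i) : N →ₗ[ℂ] N ⊗[ℂ] E) ∘ₗ π i,
      Submodule.sum_mem (Fmod L _ _) fun i _ => (Φ (ι i)).2.comp (inF_of_lieModuleHom _ _),
      fun ψ => ?_⟩
    conv_lhs => rw [hdecomp ψ]
    ext n
    simp [hsmul]
end

section
/- Let l ≥ 1, let k₁, …, k_l ∈ ℂ with k_l = 0 and each kᵢ (1 ≤ i ≤ l−1) lexicographically positive (Re kᵢ > 0, or Re kᵢ = 0 and Im kᵢ > 0). Set u = (k₁ + 1/2, …, k_{l−1} + 1/2, 1/2) ∈ ℂ^l. Then for γ ∈ {0,1}^l, the vector u − γ lies in the orbit W·u of u under the group W of signed permutations of ℂ^l if and only if γ = 0 or γ = e_l (the l-th standard basis vector). -/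
/-!
A signed permutation preserves `∑ vᵢ²`, and for `γ ∈ {0,1}^l` (so `γᵢ² = γᵢ`) subtracting `γ` from
`u = k + 1/2` lowers that sum by exactly `2 ∑ γᵢ kᵢ`. Lexicographically positive numbers cannot
cancel in a sum, so `γᵢ kᵢ = 0` for all `i`, i.e. `γ` vanishes off the last coordinate. Conversely,
negating the coordinates in the support of `γ`, where `u` equals `1/2`, sends `u` to `u - γ`.
-/

/-- `w` is a signed permutation of `ℂ^l`: there are a permutation `σ` of the coordinates and
signs `ε i ∈ {1, -1}` with `(w v) i = ε i * v (σ⁻¹ i)`. -/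
def IsSignedPerm {l : ℕ} (w : (Fin l → ℂ) →ₗ[ℂ] (Fin l → ℂ)) : Prop :=
  ∃ (σ : Equiv.Perm (Fin l)) (ε : Fin l → ℂ),
    (∀ i, ε i = 1 ∨ ε i = -1) ∧ ∀ (v : Fin l → ℂ) (i : Fin l), w v i = ε i * v (σ.symm i)

/-- `Γ = {0,1}^l`, the set of vectors with all coordinates `0` or `1`. -/
def Gam (l : ℕ) : Set (Fin l → ℂ) := {γ | ∀ i, γ i = 0 ∨ γ i = 1}

/-- `ρ₁ = (1/2, …, 1/2)`. -/
noncomputable def rho1 (l : ℕ) : Fin l → ℂ := fun _ => 1/2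

/-- The shifted action `w_* γ = w(γ - ρ₁) + ρ₁`. -/
noncomputable def wstar {l : ℕ} (w : (Fin l → ℂ) →ₗ[ℂ] (Fin l → ℂ)) (γ : Fin l → ℂ) : Fin l → ℂ :=
  w (γ - rho1 l) + rho1 l

/-- `z ∈ ℂ` is lexicographically positive: `Re z > 0`, or `Re z = 0` and `Im z > 0`. -/
def LexPos (z : ℂ) : Prop := 0 < z.re ∨ (z.re = 0 ∧ 0 < z.im)

theorem LexPos.ne_zero {z : ℂ} (hz : LexPos z) : z ≠ 0 := by
  rintro rfl
  simp [LexPos] at hz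

theorem LexPos.add {z w : ℂ} (hz : LexPos z) (hw : w = 0 ∨ LexPos w) : LexPos (z + w) := by
  rcases hw with rfl | hw
  · simpa using hz
  unfold LexPos at *
  simp only [Complex.add_re, Complex.add_im]
  rcases hz with hz | ⟨hz, hz'⟩ <;> rcases hw with hw | ⟨hw, hw'⟩
  all_goals first | (left; linarith) | (right; constructor <;> linarith)

theorem Finset.eq_zero_of_sum_eq_zero_of_lexPos {ι : Type*} {s : Finset ι} {f : ι → ℂ}
    (hf : ∀ i ∈ s, f i = 0 ∨ LexPos (f i)) (hsum : ∑ i ∈ s, f i = 0) : ∀ i ∈ s, f i = 0 := by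
  classical
  intro i hi
  by_contra hne
  have hrest : (∑ j ∈ s.erase i, f j) = 0 ∨ LexPos (∑ j ∈ s.erase i, f j) := by
    refine Finset.sum_induction f (fun z => z = 0 ∨ LexPos z) ?_ (Or.inl rfl)
      fun j hj => hf j (Finset.mem_of_mem_erase hj)
    rintro z w (rfl | hz) hw
    · simpa using hw
    · exact Or.inr (hz.add hw)
  rw [← Finset.add_sum_erase s f hi] at hsum
  exact (((hf i hi).resolve_left hne).add hrest).ne_zero hsum

theorem IsSignedPerm.sum_sq_apply {l : ℕ} {w : (Fin l → ℂ) →ₗ[ℂ] (Fin l → ℂ)}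
    (hw : IsSignedPerm w) (v : Fin l → ℂ) : ∑ i, w v i ^ 2 = ∑ i, v i ^ 2 := by
  obtain ⟨σ, ε, hε, hwv⟩ := hw
  calc ∑ i, w v i ^ 2 = ∑ i, v (σ.symm i) ^ 2 := by
        refine Finset.sum_congr rfl fun i _ => ?_
        rcases hε i with h | h <;> simp [hwv, h]
    _ = ∑ i, v i ^ 2 := Equiv.sum_comp σ.symm (fun j => v j ^ 2)

theorem isSignedPerm_pi_smul_proj {l : ℕ} {ε : Fin l → ℂ} (hε : ∀ i, ε i = 1 ∨ ε i = -1) :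
    IsSignedPerm (LinearMap.pi fun i => ε i • LinearMap.proj i) :=
  ⟨1, ε, hε, fun _ _ => rfl⟩

section Shift

variable {l : ℕ} {k γ : Fin l → ℂ}

theorem sum_mul_eq_zero_of_isSignedPerm (hγ : γ ∈ Gam l)
    {w : (Fin l → ℂ) →ₗ[ℂ] (Fin l → ℂ)} (hw : IsSignedPerm w)
    (hwu : w (fun i => k i + 1/2) = (fun i => k i + 1/2) - γ) : ∑ i, γ i * k i = 0 := by
  have hsq : ∀ i, (k i + 1/2 - γ i) ^ 2 = (k i + 1/2) ^ 2 - 2 * (γ i * k i) := by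
    intro i
    rcases hγ i with h | h <;> rw [h] <;> ring
  have hsum := hw.sum_sq_apply (fun i => k i + 1/2)
  simp only [hwu, Pi.sub_apply, hsq, Finset.sum_sub_distrib, ← Finset.mul_sum] at hsum
  simpa using hsum

theorem exists_isSignedPerm_of_mul_eq_zero (hγ : γ ∈ Gam l) (hk : ∀ i, γ i * k i = 0) :
    ∃ w : (Fin l → ℂ) →ₗ[ℂ] (Fin l → ℂ), IsSignedPerm w ∧
      w (fun i => k i + 1/2) = (fun i => k i + 1/2) - γ := by
  refine ⟨_, isSignedPerm_pi_smul_proj (ε := fun i => 1 - 2 * γ i) fun i => ?_, ?_⟩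
  · rcases hγ i with h | h <;> norm_num [h]
  · funext i
    have := hk i
    simp only [LinearMap.pi_apply, LinearMap.smul_apply, LinearMap.proj_apply, smul_eq_mul,
      Pi.sub_apply]
    linear_combination -2 * this

end Shift

theorem mul_eq_zero_iff_eq_zero_or_eq_single {m : ℕ} {k γ : Fin (m + 1) → ℂ}
    (hlast : k (Fin.last m) = 0) (hpos : ∀ i, i ≠ Fin.last m → LexPos (k i))
    (hγ : γ ∈ Gam (m + 1)) :
    (∀ i, γ i * k i = 0) ↔ γ = 0 ∨ γ = Pi.single (Fin.last m) 1 := by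
  constructor
  · intro hk
    have hγ_single : γ = Pi.single (Fin.last m) (γ (Fin.last m)) := by
      funext i
      by_cases hi : i = Fin.last m
      · simp [hi]
      · simpa [hi, (hpos i hi).ne_zero] using hk i
    rcases hγ (Fin.last m) with h | h <;> rw [h] at hγ_single
    · exact Or.inl (by simpa using hγ_single)
    · exact Or.inr hγ_single
  · rintro (rfl | rfl) i
    · simp
    · by_cases hi : i = Fin.last m
      · simp [hi, hlast]
      · simp [hi]

/-- Let `k₁, …, k_l ∈ ℂ` with `k_l = 0` and `k_i` lexicographically positive
for `i < l`, and set `u = (k₁ + 1/2, …, k_{l-1} + 1/2, 1/2)`. For `γ ∈ {0,1}^l`, the vector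
`u - γ` lies in the orbit of `u` under the group of signed permutations if and only if
`γ = 0` or `γ = e_l`.  (Here `l = m + 1 ≥ 1`.) -/
theorem statement10 (m : ℕ) (k : Fin (m + 1) → ℂ)
    (hlast : k (Fin.last m) = 0)
    (hpos : ∀ i : Fin (m + 1), i ≠ Fin.last m → LexPos (k i))
    (γ : Fin (m + 1) → ℂ) (hγ : γ ∈ Gam (m + 1)) :
    (∃ w : (Fin (m + 1) → ℂ) →ₗ[ℂ] (Fin (m + 1) → ℂ), IsSignedPerm w ∧
        w (fun i => k i + 1/2) = (fun i => k i + 1/2) - γ) ↔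
      (γ = 0 ∨ γ = Pi.single (Fin.last m) (1 : ℂ)) := by
  rw [← mul_eq_zero_iff_eq_zero_or_eq_single hlast hpos hγ]
  refine ⟨fun ⟨w, hw, hwu⟩ => ?_, exists_isSignedPerm_of_mul_eq_zero hγ⟩
  refine fun i => Finset.eq_zero_of_sum_eq_zero_of_lexPos (fun i _ => ?_)
    (sum_mul_eq_zero_of_isSignedPerm hγ hw hwu) i (Finset.mem_univ i)
  by_cases hi : i = Fin.last m
  · simp [hi, hlast]
  · rcases hγ i with h | h <;> simp [h, hpos i hi]
end

section
/- Let l ≥ 1, let k₁, …, k_l ∈ ℂ with k_l = 0 and each kᵢ (1 ≤ i ≤ l−1) lexicographically positive (Re kᵢ > 0, or Re kᵢ = 0 and Im kᵢ > 0). Set u = (k₁ + 1/2, …, k_{l−1} + 1/2, 1/2) and v = (k₁, …, k_{l−1}, 0) in ℂ^l. Then every signed permutation w of ℂ^l fixing u also fixes v: w(u) = u implies w(v) = v. In other words, Stab_W(u) ⊆ Stab_W(v). -/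
/-!
All coordinates of `v` have nonnegative real part, and `u = v + c` with `Re c = 1/2 > 0`.
If `w` sends the coordinate `u_j` to position `i` with sign `+1`, then `u_j = u_i` and so
`v_j = v_i`. A sign `-1` would force `v_j + v_i = -2c`, whose real part is negative.
-/

lemma LexPos.re_nonneg {z : ℂ} (hz : LexPos z) : 0 ≤ z.re := by
  rcases hz with h | ⟨h, _⟩ <;> linarith

lemma sign_mul_eq_of_sign_mul_add_eq {ε a b c : ℂ} (hε : ε = 1 ∨ ε = -1)
    (ha : 0 ≤ a.re) (hb : 0 ≤ b.re) (hc : 0 < c.re) (h : ε * (a + c) = b + c) :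
    ε * a = b := by
  rcases hε with rfl | rfl
  · linear_combination h
  · have hsum : (a + b).re = (-2 * c).re := congrArg Complex.re (by linear_combination -h)
    simp only [Complex.add_re, Complex.mul_re, Complex.neg_re, Complex.neg_im, Complex.re_ofNat,
      Complex.im_ofNat] at hsum
    linarith

theorem IsSignedPerm.apply_eq_self_of_apply_add_const_eq_self {l : ℕ}
    {w : (Fin l → ℂ) →ₗ[ℂ] (Fin l → ℂ)} (hw : IsSignedPerm w) {v : Fin l → ℂ}
    (hv : ∀ j, 0 ≤ (v j).re) {c : ℂ} (hc : 0 < c.re)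
    (hfix : w (fun i => v i + c) = fun i => v i + c) :
    w v = v := by
  obtain ⟨σ, ε, hε, hform⟩ := hw
  funext i
  have hi := congrFun hfix i
  rw [hform] at hi
  rw [hform]
  exact sign_mul_eq_of_sign_mul_add_eq (hε i) (hv _) (hv i) hc hi

/-- Let `k₁, …, k_l ∈ ℂ` with `k_l = 0` and `k_i` lexicographically positive
for `i < l`, and set `u = (k₁ + 1/2, …, k_{l-1} + 1/2, 1/2)`, `v = (k₁, …, k_{l-1}, 0)`.
Every signed permutation fixing `u` also fixes `v`: `Stab_W(u) ⊆ Stab_W(v)`.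
(Here `l = m + 1 ≥ 1`.) -/
theorem statement11 (m : ℕ) (k : Fin (m + 1) → ℂ)
    (hlast : k (Fin.last m) = 0)
    (hpos : ∀ i : Fin (m + 1), i ≠ Fin.last m → LexPos (k i))
    (w : (Fin (m + 1) → ℂ) →ₗ[ℂ] (Fin (m + 1) → ℂ)) (hw : IsSignedPerm w)
    (hfix : w (fun i => k i + 1/2) = (fun i => k i + 1/2)) :
    w k = k := by
  have hre : ∀ j, 0 ≤ (k j).re := by
    intro j
    by_cases hj : j = Fin.last m
    · simp [hj, hlast]
    · exact (hpos j hj).re_nonneg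
  exact hw.apply_eq_self_of_apply_add_const_eq_self hre (by norm_num) hfix
end

section
/- Let l ≥ 1, let k₁, …, k_l ∈ ℂ with k_l = 0 and each kᵢ (1 ≤ i ≤ l−1) lexicographically positive (Re kᵢ > 0, or Re kᵢ = 0 and Im kᵢ > 0). Set u = (k₁ + 1/2, …, k_{l−1} + 1/2, 1/2) and v = (k₁, …, k_{l−1}, 0) in ℂ^l, and let e_l be the l-th standard basis vector. Then for any signed permutations w, y of ℂ^l and any γ, γ' ∈ {0, e_l}: if w(u − γ) = y(u − γ'), then w(v) = y(v). -/
/-!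
Signed permutations act coordinatewise up to sign, so it suffices to show that
`s (x + 1/2 - c) = s' (x' + 1/2 - d)` forces `s x = s' x'` for signs `s, s'`, where each pair
`(x, c)` is a coordinate of `(k, γ)`: either `x` is lexicographically positive and `c = 0`, or
`x = 0` and `c ∈ {0, 1}`. The square of `x + 1/2 - c` equals `1/4` exactly when `x = 0`, so
`x` and `x'` vanish together. Otherwise both `x + 1/2` and `x' + 1/2` are lexicographically
positive, which forces `s = s'` because lexicographic positivity is a strict cone.
-/

theorem IsSignedPerm.eq_of_forall_sign_mul {l : ℕ} {w y : (Fin l → ℂ) →ₗ[ℂ] (Fin l → ℂ)}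
    (hw : IsSignedPerm w) (hy : IsSignedPerm y) {p q u v : Fin l → ℂ}
    (hcoord : ∀ a b (s s' : ℂ), (s = 1 ∨ s = -1) → (s' = 1 ∨ s' = -1) →
      s * p a = s' * q b → s * u a = s' * v b)
    (heq : w p = y q) : w u = y v := by
  obtain ⟨σ, ε, hε, hwε⟩ := hw
  obtain ⟨τ, η, hη, hyη⟩ := hy
  funext i
  have hi := congrFun heq i
  rw [hwε, hyη] at hi ⊢
  exact hcoord _ _ _ _ (hε i) (hη i) hi

namespace LexPos

theorem add_s13 {x y : ℂ} (hx : LexPos x) (hy : LexPos y) : LexPos (x + y) := by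
  unfold LexPos at *
  rcases hx with hx | ⟨hx, hx'⟩ <;> rcases hy with hy | ⟨hy, hy'⟩
  · exact Or.inl (by simp only [Complex.add_re]; linarith)
  · exact Or.inl (by simp only [Complex.add_re]; linarith)
  · exact Or.inl (by simp only [Complex.add_re]; linarith)
  · exact Or.inr ⟨by simp [hx, hy], by simp only [Complex.add_im]; linarith⟩

theorem ne_zero_s13 {x : ℂ} (hx : LexPos x) : x ≠ 0 := by
  rintro rfl
  simp [LexPos] at hx

theorem not_neg {x : ℂ} (hx : LexPos x) : ¬ LexPos (-x) := by
  unfold LexPos at *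
  simp only [Complex.neg_re, Complex.neg_im]
  rcases hx with hx | ⟨hx, hx'⟩ <;> intro h <;> rcases h with h | ⟨h, h'⟩ <;> linarith

theorem add_half {x : ℂ} (hx : LexPos x) : LexPos (x + 1 / 2) :=
  hx.add_s13 (Or.inl (by norm_num))

theorem sign_eq {z z' s s' : ℂ} (hs : s = 1 ∨ s = -1) (hs' : s' = 1 ∨ s' = -1)
    (hz : LexPos z) (hz' : LexPos z') (h : s * z = s' * z') : s = s' := by
  rcases hs with rfl | rfl <;> rcases hs' with rfl | rfl
  · rfl
  · exact absurd ((by linear_combination h : z = -z') ▸ hz) hz'.not_neg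
  · exact absurd ((by linear_combination -h : z' = -z) ▸ hz') hz.not_neg
  · rfl

end LexPos

/-- The possible shapes of a coordinate `(k a, γ a)`. -/
def AdmissibleCoord (x c : ℂ) : Prop :=
  (LexPos x ∧ c = 0) ∨ (x = 0 ∧ (c = 0 ∨ c = 1))

namespace AdmissibleCoord

theorem eq_zero_iff_sq {x c : ℂ} (h : AdmissibleCoord x c) :
    x = 0 ↔ (x + 1 / 2 - c) ^ 2 = 1 / 4 := by
  rcases h with ⟨hx, rfl⟩ | ⟨rfl, rfl | rfl⟩
  · refine iff_of_false hx.ne_zero_s13 fun hsq => ?_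
    have : x * (x + 1) = 0 := by linear_combination hsq
    rcases mul_eq_zero.1 this with h0 | h1
    · exact hx.ne_zero_s13 h0
    · obtain rfl : x = -1 := by linear_combination h1
      norm_num [LexPos] at hx
  · norm_num
  · norm_num

theorem sign_mul_eq {x c x' d s s' : ℂ} (hx : AdmissibleCoord x c) (hx' : AdmissibleCoord x' d)
    (hs : s = 1 ∨ s = -1) (hs' : s' = 1 ∨ s' = -1)
    (h : s * (x + 1 / 2 - c) = s' * (x' + 1 / 2 - d)) : s * x = s' * x' := by
  have hs2 : s ^ 2 = 1 := by rcases hs with rfl | rfl <;> norm_num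
  have hs2' : s' ^ 2 = 1 := by rcases hs' with rfl | rfl <;> norm_num
  have hsq : (x + 1 / 2 - c) ^ 2 = (x' + 1 / 2 - d) ^ 2 := by
    linear_combination (s * (x + 1 / 2 - c) + s' * (x' + 1 / 2 - d)) * h
      - (x + 1 / 2 - c) ^ 2 * hs2 + (x' + 1 / 2 - d) ^ 2 * hs2'
  have hzero : x = 0 ↔ x' = 0 := by rw [hx.eq_zero_iff_sq, hx'.eq_zero_iff_sq, hsq]
  by_cases hx0 : x = 0
  · simp [hx0, hzero.1 hx0]
  obtain ⟨hxp, rfl⟩ := hx.resolve_right (fun h => hx0 h.1)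
  obtain ⟨hxp', rfl⟩ := hx'.resolve_right (fun h => hx0 (hzero.2 h.1))
  obtain rfl := LexPos.sign_eq hs hs' hxp.add_half hxp'.add_half (by linear_combination h)
  linear_combination h

end AdmissibleCoord

theorem admissibleCoord_of_mem {m : ℕ} {k γ : Fin (m + 1) → ℂ}
    (hlast : k (Fin.last m) = 0) (hpos : ∀ i : Fin (m + 1), i ≠ Fin.last m → LexPos (k i))
    (hγ : γ ∈ ({0, Pi.single (Fin.last m) (1 : ℂ)} : Set (Fin (m + 1) → ℂ)))
    (a : Fin (m + 1)) : AdmissibleCoord (k a) (γ a) := by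
  by_cases ha : a = Fin.last m
  · subst ha
    rcases hγ with rfl | rfl
    · exact Or.inr ⟨hlast, Or.inl rfl⟩
    · exact Or.inr ⟨hlast, Or.inr (Pi.single_eq_same _ _)⟩
  · rcases hγ with rfl | rfl
    · exact Or.inl ⟨hpos a ha, rfl⟩
    · exact Or.inl ⟨hpos a ha, Pi.single_eq_of_ne ha _⟩

/-- Let `k₁, …, k_l ∈ ℂ` with `k_l = 0` and `k_i` lexicographically positive
for `i < l`, and set `u = (k₁ + 1/2, …, k_{l-1} + 1/2, 1/2)`, `v = (k₁, …, k_{l-1}, 0)`.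
For signed permutations `w, y` and `γ, γ' ∈ {0, e_l}`: if `w(u - γ) = y(u - γ')` then
`w(v) = y(v)`.  (Here `l = m + 1 ≥ 1`.) -/
theorem statement13 (m : ℕ) (k : Fin (m + 1) → ℂ)
    (hlast : k (Fin.last m) = 0)
    (hpos : ∀ i : Fin (m + 1), i ≠ Fin.last m → LexPos (k i))
    (w y : (Fin (m + 1) → ℂ) →ₗ[ℂ] (Fin (m + 1) → ℂ))
    (hw : IsSignedPerm w) (hy : IsSignedPerm y)
    (γ γ' : Fin (m + 1) → ℂ)
    (hγ : γ ∈ ({0, Pi.single (Fin.last m) (1 : ℂ)} : Set (Fin (m + 1) → ℂ)))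
    (hγ' : γ' ∈ ({0, Pi.single (Fin.last m) (1 : ℂ)} : Set (Fin (m + 1) → ℂ)))
    (heq : w ((fun i => k i + 1/2) - γ) = y ((fun i => k i + 1/2) - γ')) :
    w k = y k := by
  refine hw.eq_of_forall_sign_mul hy (fun a b s s' hs hs' h => ?_) heq
  exact (admissibleCoord_of_mem hlast hpos hγ a).sign_mul_eq
    (admissibleCoord_of_mem hlast hpos hγ' b) hs hs' h
end
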